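/- arXiv:2012.09047 — 2 statements merged into one kernel-verified Lean document; each statement's English description precedes it below -/
import Mathlib

section
/- Let K ⊆ ℝ be compact and f₁,…,f_m: K → K continuous functions such that for every infinite sequence a₁a₂a₃… ∈ {1,…,m}^ω, the diameter of f_{a₁}∘f_{a₂}∘…∘f_{a_n}(K) tends to 0 as n → ∞. Then there exists a continuous metric d: K×K → [0,∞) such that each f_i is d-contracting, i.e., for all x ≠ y in K, d(f_i(x), f_i(y)) < d(x, y). -/
open Filter Topology

/-- Composition `f_{a₁} ∘ f_{a₂} ∘ … ∘ f_{a_n}` of a family of maps along a finite word. -/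
def wordComp {I : Type*} (f : I → ℝ → ℝ) : List I → ℝ → ℝ
  | [] => id
  | a :: t => f a ∘ wordComp f t

/-!
Let `ρₙ(x, y)` be the largest of `|f_w x - f_w y|` over the words `w` of length `n`, so that
`ρ₀(x, y) = |x - y|` and `ρₙ(fᵢ x, fᵢ y) ≤ ρₙ₊₁(x, y)`. Compactness of the space of infinite
words (König's lemma) upgrades the hypothesis to `ρₙ → 0` uniformly on `K × K`. Take
`d = supₙ φₙ ρₙ` for a strictly increasing weight `φ` with values in `(0, 1]`: it is a uniform
limit of finite maxima of continuous pseudometrics, hence continuous, and `d ≥ φ₀ |x - y|`.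
Finally `d(fᵢ x, fᵢ y) ≤ supₙ φₙ ρₙ₊₁(x, y)`, and this supremum of a null sequence is `0` or
attained at some `m`, where `φₘ ρₘ₊₁ < φₘ₊₁ ρₘ₊₁ ≤ d(x, y)`.
-/

theorem ContinuousOn.ciSup_of_finite {ι X L : Type*} [Finite ι] [TopologicalSpace X]
    [ConditionallyCompleteLattice L] [TopologicalSpace L] [ContinuousSup L] {s : Set X}
    {g : ι → X → L} (hg : ∀ i, ContinuousOn (g i) s) :
    ContinuousOn (fun x => ⨆ i, g i x) s := by
  cases isEmpty_or_nonempty ι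
  · simpa only [iSup_of_empty'] using continuousOn_const
  · have := Fintype.ofFinite ι
    simpa only [Finset.sup'_univ_eq_ciSup] using
      ContinuousOn.finset_sup'_apply Finset.univ_nonempty fun i _ => hg i

theorem TendstoUniformlyOn.mul_of_abs_le_one {ι X : Type*} {l : Filter ι} {s : Set X}
    {g : ι → X → ℝ} {c : ι → ℝ} (hg : TendstoUniformlyOn g 0 l s) (hc : ∀ n, |c n| ≤ 1) :
    TendstoUniformlyOn (fun n x => c n * g n x) 0 l s := by
  rw [Metric.tendstoUniformlyOn_iff] at hg ⊢
  intro ε hε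
  filter_upwards [hg ε hε] with n hn x hx
  have hgx := hn x hx
  rw [Pi.zero_apply, dist_zero_left, Real.norm_eq_abs] at hgx ⊢
  rw [abs_mul]
  exact (mul_le_of_le_one_left (abs_nonneg _) (hc n)).trans_lt hgx

theorem ContinuousOn.iSup_of_tendstoUniformlyOn_zero {X : Type*} [TopologicalSpace X]
    {s : Set X} {g : ℕ → X → ℝ} (hg : ∀ n, ContinuousOn (g n) s)
    (hlim : TendstoUniformlyOn g 0 atTop s) :
    ContinuousOn (fun x => ⨆ n, g n x) s := by
  suffices hunif : TendstoUniformlyOn (partialSups g) (fun x => ⨆ n, g n x) atTop s from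
    hunif.continuousOn (Frequently.of_forall fun _ => ContinuousOn.partialSups fun n _ => hg n)
  rw [Metric.tendstoUniformlyOn_iff] at hlim ⊢
  intro ε hε
  obtain ⟨N₀, hN₀⟩ := eventually_atTop.mp (hlim (ε / 4) (by positivity))
  filter_upwards [eventually_ge_atTop N₀] with N hN x hx
  have hsmall : ∀ n ≥ N₀, |g n x| < ε / 4 := fun n hn => by
    simpa [Real.dist_eq, abs_sub_comm] using hN₀ n hn x hx
  have hle : ∀ n ≤ N, g n x ≤ partialSups g N x := fun n hn => le_partialSups_of_le g hn x
  -- beyond `N₀` all terms lie within `ε / 2` of each other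
  have hbound : ∀ n, g n x ≤ partialSups g N x + ε / 2 := by
    intro n
    rcases le_total n N with hn | hn
    · linarith [hle n hn]
    · linarith [hle N le_rfl, (abs_lt.mp (hsmall n (hN.trans hn))).2,
        (abs_lt.mp (hsmall N hN)).1]
  have hbdd : BddAbove (Set.range fun n => g n x) := ⟨_, Set.forall_mem_range.mpr hbound⟩
  have hlower : partialSups g N x ≤ ⨆ n, g n x := by
    rw [Pi.partialSups_apply]
    exact partialSups_le _ _ _ fun n _ => le_ciSup hbdd n
  have hupper : ⨆ n, g n x ≤ partialSups g N x + ε / 2 := ciSup_le hbound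
  rw [Real.dist_eq, abs_of_nonneg (by linarith)]
  linarith

theorem Filter.Tendsto.exists_forall_ge_of_lt {b : ℕ → ℝ} {c : ℝ} (hb : Tendsto b atTop (𝓝 c))
    {n₀ : ℕ} (hn₀ : c < b n₀) : ∃ m, ∀ n, b n ≤ b m := by
  have hfin : {n | ¬ b n < b n₀}.Finite := by
    rw [← eventually_cofinite, Nat.cofinite_eq_atTop]
    exact hb.eventually_lt_const hn₀
  obtain ⟨m, hm, hmax⟩ := Set.exists_max_image _ b hfin ⟨n₀, lt_irrefl _⟩
  refine ⟨m, fun n => ?_⟩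
  by_cases hn : b n < b n₀
  · exact hn.le.trans (not_lt.mp hm)
  · exact hmax n hn

theorem iSup_mul_succ_lt_iSup_mul {φ a : ℕ → ℝ} (hφ : StrictMono φ) (hφ0 : 0 < φ 0)
    (hφ1 : ∀ n, φ n ≤ 1) (ha : ∀ n, 0 ≤ a n) (ha0 : 0 < a 0)
    (hlim : Tendsto a atTop (𝓝 0)) :
    ⨆ n, φ n * a (n + 1) < ⨆ n, φ n * a n := by
  have hφpos n : 0 < φ n := hφ0.trans_le (hφ.monotone (Nat.zero_le n))
  have hdamped {b : ℕ → ℝ} (hb : ∀ n, 0 ≤ b n) (hb0 : Tendsto b atTop (𝓝 0)) :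
      Tendsto (fun n => φ n * b n) atTop (𝓝 0) :=
    squeeze_zero (fun n => mul_nonneg (hφpos n).le (hb n))
      (fun n => mul_le_of_le_one_left (hb n) (hφ1 n)) hb0
  have hbdd := (hdamped ha hlim).bddAbove_range
  by_cases hz : ∀ n, a (n + 1) = 0
  · calc ⨆ n, φ n * a (n + 1) = 0 := by simp [hz]
      _ < φ 0 * a 0 := mul_pos hφ0 ha0
      _ ≤ ⨆ n, φ n * a n := le_ciSup hbdd 0
  push Not at hz
  obtain ⟨n₀, hn₀⟩ := hz
  have hpos : 0 < φ n₀ * a (n₀ + 1) := mul_pos (hφpos n₀) ((ha _).lt_of_ne' hn₀)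
  obtain ⟨m, hm⟩ := (hdamped (fun n => ha (n + 1)) (hlim.comp (tendsto_add_atTop_nat 1))
    ).exists_forall_ge_of_lt hpos
  have ham : 0 < a (m + 1) := pos_of_mul_pos_right (hpos.trans_le (hm n₀)) (hφpos m).le
  calc ⨆ n, φ n * a (n + 1) ≤ φ m * a (m + 1) := ciSup_le hm
    _ < φ (m + 1) * a (m + 1) := mul_lt_mul_of_pos_right (hφ (lt_add_one m)) ham
    _ ≤ ⨆ n, φ n * a n := le_ciSup hbdd (m + 1)

theorem exists_seq_forall_prefix {I : Type*} [Finite I] (P : ∀ n, (Fin n → I) → Prop)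
    (hinit : ∀ n (w : Fin (n + 1) → I), P (n + 1) w → P n (Fin.init w))
    (hne : ∀ n, ∃ w, P n w) : ∃ a : ℕ → I, ∀ n, P n fun j => a j := by
  obtain ⟨w₁, -⟩ := hne 1
  let _ : TopologicalSpace I := ⊥
  have : DiscreteTopology I := ⟨rfl⟩
  let C n : Set (ℕ → I) := {a | P n fun j => a j}
  have hclosed n : IsClosed (C n) :=
    (isClosed_discrete {w : Fin n → I | P n w}).preimage
      (continuous_pi fun j => continuous_apply _)
  have hnonempty n : (C n).Nonempty := by
    obtain ⟨w, hw⟩ := hne n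
    refine ⟨Function.extend Fin.val w fun _ => w₁ 0, ?_⟩
    have hrestrict : (fun j : Fin n => Function.extend Fin.val w (fun _ => w₁ 0) j) = w :=
      funext fun j => Fin.val_injective.extend_apply w _ j
    simpa [C, hrestrict] using hw
  obtain ⟨a, ha⟩ := IsCompact.nonempty_iInter_of_sequence_nonempty_isCompact_isClosed C
    (fun n a ha => hinit n _ ha) hnonempty (hclosed 0).isCompact hclosed
  exact ⟨a, Set.mem_iInter.mp ha⟩

section Words

variable {I : Type*} (f : I → ℝ → ℝ)

theorem wordComp_append (l₁ l₂ : List I) :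
    wordComp f (l₁ ++ l₂) = wordComp f l₁ ∘ wordComp f l₂ := by
  induction l₁ with
  | nil => rfl
  | cons a t ih => simp only [List.cons_append, wordComp, ih]; rfl

theorem wordComp_ofFn_snoc {n : ℕ} (w : Fin n → I) (i : I) :
    wordComp f (List.ofFn (Fin.snoc w i : Fin (n + 1) → I)) = wordComp f (List.ofFn w) ∘ f i := by
  rw [List.ofFn_succ']
  simp [List.concat_eq_append, wordComp_append, wordComp]

variable {f} {K : Set ℝ}

theorem wordComp_mapsTo (hfm : ∀ i, Set.MapsTo (f i) K K) (l : List I) :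
    Set.MapsTo (wordComp f l) K K := by
  induction l with
  | nil => exact Set.mapsTo_id K
  | cons a t ih => exact (hfm a).comp ih

theorem wordComp_continuousOn (hfc : ∀ i, ContinuousOn (f i) K)
    (hfm : ∀ i, Set.MapsTo (f i) K K) (l : List I) : ContinuousOn (wordComp f l) K := by
  induction l with
  | nil => exact continuousOn_id
  | cons a t ih => exact (hfc a).comp ih (wordComp_mapsTo hfm t)

theorem diam_image_wordComp_ofFn_le_init (hK : Bornology.IsBounded K)
    (hfm : ∀ i, Set.MapsTo (f i) K K) {n : ℕ} (w : Fin (n + 1) → I) :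
    Metric.diam (wordComp f (List.ofFn w) '' K) ≤
      Metric.diam (wordComp f (List.ofFn (Fin.init w)) '' K) := by
  refine Metric.diam_mono ?_ (hK.subset (wordComp_mapsTo hfm _).image_subset)
  conv_lhs => rw [← Fin.snoc_init_self w, wordComp_ofFn_snoc, Set.image_comp]
  exact Set.image_mono (hfm _).image_subset

theorem eventually_forall_diam_image_wordComp_lt [Finite I] (hK : IsCompact K)
    (hfm : ∀ i, Set.MapsTo (f i) K K)
    (hdiam : ∀ a : ℕ → I,
      Tendsto (fun n : ℕ => Metric.diam (wordComp f (List.ofFn fun i : Fin n => a i) '' K))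
        atTop (𝓝 0))
    {ε : ℝ} (hε : 0 < ε) :
    ∀ᶠ n in atTop, ∀ w : Fin n → I, Metric.diam (wordComp f (List.ofFn w) '' K) < ε := by
  have hinit {m : ℕ} (w : Fin (m + 1) → I) := diam_image_wordComp_ofFn_le_init hK.isBounded hfm w
  obtain ⟨N, hN⟩ : ∃ N, ∀ w : Fin N → I, Metric.diam (wordComp f (List.ofFn w) '' K) < ε := by
    by_contra! hlarge
    obtain ⟨a, ha⟩ := exists_seq_forall_prefix
      (fun n w => ε ≤ Metric.diam (wordComp f (List.ofFn w) '' K))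
      (fun n w hw => hw.trans (hinit w)) hlarge
    exact hε.not_ge (ge_of_tendsto' (hdiam a) ha)
  exact eventually_atTop.mpr ⟨N, fun n hn => Nat.le_induction hN
    (fun m _ ih w => (hinit w).trans_lt (ih _)) n hn⟩

end Words

section WordDist

variable {I : Type*} (f : I → ℝ → ℝ)

noncomputable def wordDist (n : ℕ) (x y : ℝ) : ℝ :=
  ⨆ w : Fin n → I, dist (wordComp f (List.ofFn w) x) (wordComp f (List.ofFn w) y)

variable {n : ℕ} {x y : ℝ}

theorem wordDist_le {c : ℝ} (hc : 0 ≤ c)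
    (h : ∀ w : Fin n → I, dist (wordComp f (List.ofFn w) x) (wordComp f (List.ofFn w) y) ≤ c) :
    wordDist f n x y ≤ c :=
  Real.iSup_le h hc

theorem wordDist_nonneg (n : ℕ) (x y : ℝ) : 0 ≤ wordDist f n x y :=
  Real.iSup_nonneg fun _ => dist_nonneg

theorem wordDist_zero (x y : ℝ) : wordDist f 0 x y = dist x y := by
  simp [wordDist, wordComp]

theorem wordDist_self (n : ℕ) (x : ℝ) : wordDist f n x x = 0 := by
  simp [wordDist]

theorem wordDist_comm (n : ℕ) (x y : ℝ) : wordDist f n x y = wordDist f n y x := by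
  simp only [wordDist, dist_comm]

section Finite

variable [Finite I]

theorem dist_le_wordDist (w : Fin n → I) (x y : ℝ) :
    dist (wordComp f (List.ofFn w) x) (wordComp f (List.ofFn w) y) ≤ wordDist f n x y :=
  le_ciSup (f := fun w : Fin n → I =>
      dist (wordComp f (List.ofFn w) x) (wordComp f (List.ofFn w) y))
    (Set.finite_range _).bddAbove w

theorem wordDist_triangle (n : ℕ) (x y z : ℝ) :
    wordDist f n x z ≤ wordDist f n x y + wordDist f n y z :=
  wordDist_le f (add_nonneg (wordDist_nonneg f n x y) (wordDist_nonneg f n y z)) fun w =>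
    (dist_triangle _ _ _).trans (add_le_add (dist_le_wordDist f w x y) (dist_le_wordDist f w y z))

theorem wordDist_apply_le_succ (n : ℕ) (i : I) (x y : ℝ) :
    wordDist f n (f i x) (f i y) ≤ wordDist f (n + 1) x y :=
  wordDist_le f (wordDist_nonneg f _ x y) fun w => by
    simpa only [wordComp_ofFn_snoc, Function.comp_apply] using
      dist_le_wordDist f (Fin.snoc w i : Fin (n + 1) → I) x y

end Finite

variable {f} {K : Set ℝ}

theorem wordDist_le_of_forall_diam_le (hK : Bornology.IsBounded K)
    (hfm : ∀ i, Set.MapsTo (f i) K K) (hx : x ∈ K) (hy : y ∈ K) {c : ℝ} (hc : 0 ≤ c)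
    (h : ∀ w : Fin n → I, Metric.diam (wordComp f (List.ofFn w) '' K) ≤ c) :
    wordDist f n x y ≤ c :=
  wordDist_le f hc fun w => (Metric.dist_le_diam_of_mem
    (hK.subset (wordComp_mapsTo hfm _).image_subset) ⟨x, hx, rfl⟩ ⟨y, hy, rfl⟩).trans (h w)

theorem wordDist_le_diam (hK : Bornology.IsBounded K) (hfm : ∀ i, Set.MapsTo (f i) K K)
    (hx : x ∈ K) (hy : y ∈ K) : wordDist f n x y ≤ Metric.diam K :=
  wordDist_le_of_forall_diam_le hK hfm hx hy Metric.diam_nonneg fun _ =>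
    Metric.diam_mono (wordComp_mapsTo hfm _).image_subset hK

variable [Finite I]

theorem continuousOn_wordDist (hfc : ∀ i, ContinuousOn (f i) K)
    (hfm : ∀ i, Set.MapsTo (f i) K K) (n : ℕ) :
    ContinuousOn (fun p : ℝ × ℝ => wordDist f n p.1 p.2) (K ×ˢ K) :=
  ContinuousOn.ciSup_of_finite fun w : Fin n → I =>
    have hw := wordComp_continuousOn hfc hfm (List.ofFn w)
    continuous_dist.comp_continuousOn <|
      (hw.comp continuousOn_fst fun _ hp => (Set.mem_prod.mp hp).1).prodMk
        (hw.comp continuousOn_snd fun _ hp => (Set.mem_prod.mp hp).2)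

theorem tendstoUniformlyOn_wordDist (hK : IsCompact K) (hfm : ∀ i, Set.MapsTo (f i) K K)
    (hdiam : ∀ a : ℕ → I,
      Tendsto (fun n : ℕ => Metric.diam (wordComp f (List.ofFn fun i : Fin n => a i) '' K))
        atTop (𝓝 0)) :
    TendstoUniformlyOn (fun n (p : ℝ × ℝ) => wordDist f n p.1 p.2) 0 atTop (K ×ˢ K) := by
  rw [Metric.tendstoUniformlyOn_iff]
  intro ε hε
  filter_upwards [eventually_forall_diam_image_wordComp_lt hK hfm hdiam (half_pos hε)]
    with n hn p hp
  rw [Pi.zero_apply, dist_zero_left, Real.norm_of_nonneg (wordDist_nonneg f n _ _)]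
  exact (wordDist_le_of_forall_diam_le hK.isBounded hfm hp.1 hp.2 (half_pos hε).le
    fun w => (hn w).le).trans_lt (half_lt_self hε)

end WordDist

noncomputable def contractionWeight (n : ℕ) : ℝ := 1 - 2⁻¹ ^ (n + 1)

theorem strictMono_contractionWeight : StrictMono contractionWeight := fun m n hmn => by
  have := pow_lt_pow_right_of_lt_one₀ (by norm_num : (0 : ℝ) < 2⁻¹) (by norm_num)
    (Nat.add_lt_add_right hmn 1)
  unfold contractionWeight
  linarith

theorem contractionWeight_pos (n : ℕ) : 0 < contractionWeight n := by
  have := pow_lt_one₀ (by norm_num : (0 : ℝ) ≤ 2⁻¹) (by norm_num) (Nat.add_one_ne_zero n)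
  unfold contractionWeight
  linarith

theorem contractionWeight_le_one (n : ℕ) : contractionWeight n ≤ 1 := by
  have : (0 : ℝ) ≤ 2⁻¹ ^ (n + 1) := by positivity
  unfold contractionWeight
  linarith

section WordMetric

variable {I : Type*} (f : I → ℝ → ℝ)

noncomputable def wordMetric (x y : ℝ) : ℝ := ⨆ n, contractionWeight n * wordDist f n x y

variable {f} {K : Set ℝ} {x y z : ℝ}

theorem contractionWeight_mul_wordDist_le_diam (hK : Bornology.IsBounded K)
    (hfm : ∀ i, Set.MapsTo (f i) K K) (hx : x ∈ K) (hy : y ∈ K) (m n : ℕ) :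
    contractionWeight m * wordDist f n x y ≤ Metric.diam K :=
  (mul_le_of_le_one_left (wordDist_nonneg f n x y) (contractionWeight_le_one m)).trans
    (wordDist_le_diam hK hfm hx hy)

theorem le_wordMetric (hK : Bornology.IsBounded K) (hfm : ∀ i, Set.MapsTo (f i) K K)
    (hx : x ∈ K) (hy : y ∈ K) (n : ℕ) :
    contractionWeight n * wordDist f n x y ≤ wordMetric f x y :=
  le_ciSup ⟨_, Set.forall_mem_range.mpr
    (fun m => contractionWeight_mul_wordDist_le_diam hK hfm hx hy m m)⟩ n

theorem wordMetric_nonneg (hK : Bornology.IsBounded K) (hfm : ∀ i, Set.MapsTo (f i) K K)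
    (hx : x ∈ K) (hy : y ∈ K) : 0 ≤ wordMetric f x y :=
  (mul_nonneg (contractionWeight_pos 0).le (wordDist_nonneg f 0 x y)).trans
    (le_wordMetric hK hfm hx hy 0)

theorem wordMetric_self (x : ℝ) : wordMetric f x x = 0 := by
  simp [wordMetric, wordDist_self]

theorem wordMetric_eq_zero_iff (hK : Bornology.IsBounded K) (hfm : ∀ i, Set.MapsTo (f i) K K)
    (hx : x ∈ K) (hy : y ∈ K) : wordMetric f x y = 0 ↔ x = y := by
  refine ⟨fun h => ?_, fun h => h ▸ wordMetric_self x⟩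
  by_contra hxy
  have := le_wordMetric hK hfm hx hy 0
  rw [wordDist_zero, h] at this
  exact this.not_gt (mul_pos (contractionWeight_pos 0) (dist_pos.mpr hxy))

theorem wordMetric_comm (x y : ℝ) : wordMetric f x y = wordMetric f y x := by
  simp only [wordMetric, wordDist_comm f _ x y]

theorem wordMetric_triangle [Finite I] (hK : Bornology.IsBounded K)
    (hfm : ∀ i, Set.MapsTo (f i) K K)
    (hx : x ∈ K) (hy : y ∈ K) (hz : z ∈ K) :
    wordMetric f x z ≤ wordMetric f x y + wordMetric f y z :=
  ciSup_le fun n => calc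
    contractionWeight n * wordDist f n x z
        ≤ contractionWeight n * wordDist f n x y + contractionWeight n * wordDist f n y z := by
      rw [← mul_add]
      exact mul_le_mul_of_nonneg_left (wordDist_triangle f n x y z) (contractionWeight_pos n).le
    _ ≤ wordMetric f x y + wordMetric f y z :=
      add_le_add (le_wordMetric hK hfm hx hy n) (le_wordMetric hK hfm hy hz n)

theorem continuousOn_wordMetric [Finite I] (hfc : ∀ i, ContinuousOn (f i) K)
    (hK : IsCompact K) (hfm : ∀ i, Set.MapsTo (f i) K K)
    (hdiam : ∀ a : ℕ → I,
      Tendsto (fun n : ℕ => Metric.diam (wordComp f (List.ofFn fun i : Fin n => a i) '' K))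
        atTop (𝓝 0)) :
    ContinuousOn (fun p : ℝ × ℝ => wordMetric f p.1 p.2) (K ×ˢ K) :=
  ContinuousOn.iSup_of_tendstoUniformlyOn_zero
    (fun n => continuousOn_const.mul (continuousOn_wordDist hfc hfm n))
    ((tendstoUniformlyOn_wordDist hK hfm hdiam).mul_of_abs_le_one fun n =>
      (abs_of_pos (contractionWeight_pos n)).le.trans (contractionWeight_le_one n))

theorem wordMetric_apply_lt [Finite I] (hK : IsCompact K) (hfm : ∀ i, Set.MapsTo (f i) K K)
    (hdiam : ∀ a : ℕ → I,
      Tendsto (fun n : ℕ => Metric.diam (wordComp f (List.ofFn fun i : Fin n => a i) '' K))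
        atTop (𝓝 0))
    (i : I) (hx : x ∈ K) (hy : y ∈ K) (hxy : x ≠ y) :
    wordMetric f (f i x) (f i y) < wordMetric f x y := by
  have hbdd : BddAbove (Set.range fun n => contractionWeight n * wordDist f (n + 1) x y) :=
    ⟨_, Set.forall_mem_range.mpr fun n =>
      contractionWeight_mul_wordDist_le_diam hK.isBounded hfm hx hy n (n + 1)⟩
  have hshift : wordMetric f (f i x) (f i y) ≤
      ⨆ n, contractionWeight n * wordDist f (n + 1) x y :=
    ciSup_mono hbdd fun n => mul_le_mul_of_nonneg_left (wordDist_apply_le_succ f n i x y)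
      (contractionWeight_pos n).le
  have hlim : Tendsto (fun n => wordDist f n x y) atTop (𝓝 0) :=
    (tendstoUniformlyOn_wordDist hK hfm hdiam).tendsto_at (x := (x, y)) ⟨hx, hy⟩
  have h0 : 0 < wordDist f 0 x y := by
    rw [wordDist_zero]
    exact dist_pos.mpr hxy
  exact hshift.trans_lt (iSup_mul_succ_lt_iSup_mul strictMono_contractionWeight
    (contractionWeight_pos 0) contractionWeight_le_one (wordDist_nonneg f · x y) h0 hlim)

end WordMetric

theorem exists_contracting_metric_general
    {I : Type*} [Fintype I]
    (K : Set ℝ) (hK : IsCompact K)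
    (f : I → ℝ → ℝ)
    (hfc : ∀ i, ContinuousOn (f i) K)
    (hfm : ∀ i, Set.MapsTo (f i) K K)
    (hdiam : ∀ a : ℕ → I,
      Tendsto
        (fun n : ℕ =>
          Metric.diam (wordComp f (List.ofFn fun i : Fin n => a i) '' K))
        atTop (𝓝 0)) :
    ∃ d : ℝ → ℝ → ℝ,
      ContinuousOn (fun p : ℝ × ℝ => d p.1 p.2) (K ×ˢ K) ∧
      (∀ x ∈ K, ∀ y ∈ K, 0 ≤ d x y) ∧
      (∀ x ∈ K, ∀ y ∈ K, (d x y = 0 ↔ x = y)) ∧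
      (∀ x ∈ K, ∀ y ∈ K, d x y = d y x) ∧
      (∀ x ∈ K, ∀ y ∈ K, ∀ z ∈ K, d x z ≤ d x y + d y z) ∧
      (∀ i, ∀ x ∈ K, ∀ y ∈ K, x ≠ y → d (f i x) (f i y) < d x y) :=
  ⟨wordMetric f, continuousOn_wordMetric hfc hK hfm hdiam,
    fun _ hx _ hy => wordMetric_nonneg hK.isBounded hfm hx hy,
    fun _ hx _ hy => wordMetric_eq_zero_iff hK.isBounded hfm hx hy,
    fun x _ y _ => wordMetric_comm x y,
    fun _ hx _ hy _ hz => wordMetric_triangle hK.isBounded hfm hx hy hz,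
    fun i _ hx _ hy hxy => wordMetric_apply_lt hK hfm hdiam i hx hy hxy⟩

theorem exists_contracting_metric
    {I : Type*} [Fintype I] [Nonempty I]
    (K : Set ℝ) (hK : IsCompact K) (hne : K.Nonempty)
    (f : I → ℝ → ℝ)
    (hfc : ∀ i, ContinuousOn (f i) K)
    (hfm : ∀ i, Set.MapsTo (f i) K K)
    (hdiam : ∀ a : ℕ → I,
      Tendsto
        (fun n : ℕ =>
          Metric.diam (wordComp f (List.ofFn fun i : Fin n => a i) '' K))
        atTop (𝓝 0)) :
    ∃ d : ℝ → ℝ → ℝ,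
      ContinuousOn (fun p : ℝ × ℝ => d p.1 p.2) (K ×ˢ K) ∧
      (∀ x ∈ K, ∀ y ∈ K, 0 ≤ d x y) ∧
      (∀ x ∈ K, ∀ y ∈ K, (d x y = 0 ↔ x = y)) ∧
      (∀ x ∈ K, ∀ y ∈ K, d x y = d y x) ∧
      (∀ x ∈ K, ∀ y ∈ K, ∀ z ∈ K, d x z ≤ d x y + d y z) ∧
      (∀ i, ∀ x ∈ K, ∀ y ∈ K, x ≠ y → d (f i x) (f i y) < d x y) :=
  exists_contracting_metric_general K hK f hfc hfm hdiam
end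

section
/- Let K ⊆ ℝ be compact, f₁,…,f_m: K → K continuous, and d a continuous metric on K such that every f_i is d-contracting. Then for every infinite sequence a₁a₂a₃… ∈ {1,…,m}^ω, the diameter of f_{a₁}∘f_{a₂}∘…∘f_{a_n}(K) tends to 0 as n → ∞. -/
open Filter Topology

theorem contracting_metric_implies_diam_tendsto_zero
    {I : Type*} [Fintype I] [Nonempty I]
    (K : Set ℝ) (hK : IsCompact K) (hne : K.Nonempty)
    (f : I → ℝ → ℝ)
    (hfc : ∀ i, ContinuousOn (f i) K)
    (hfm : ∀ i, Set.MapsTo (f i) K K)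
    (d : ℝ → ℝ → ℝ)
    (hdc : ContinuousOn (fun p : ℝ × ℝ => d p.1 p.2) (K ×ˢ K))
    (hd0 : ∀ x ∈ K, ∀ y ∈ K, 0 ≤ d x y)
    (hdeq : ∀ x ∈ K, ∀ y ∈ K, (d x y = 0 ↔ x = y))
    (hdsymm : ∀ x ∈ K, ∀ y ∈ K, d x y = d y x)
    (hdtri : ∀ x ∈ K, ∀ y ∈ K, ∀ z ∈ K, d x z ≤ d x y + d y z)
    (hcontr : ∀ i, ∀ x ∈ K, ∀ y ∈ K, x ≠ y → d (f i x) (f i y) < d x y)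
    (a : ℕ → I) :
    Tendsto
      (fun n : ℕ =>
        Metric.diam (wordComp f (List.ofFn fun i : Fin n => a i) '' K))
      atTop (𝓝 0) := by
  classical
  set P : Set (ℝ × ℝ) := K ×ˢ K with hPdef
  have hPc : IsCompact P := hK.prod hK
  have hPne : P.Nonempty := hne.prod hne
  -- extend d to a globally continuous function D
  obtain ⟨D, hD⟩ : ∃ D : C(ℝ × ℝ, ℝ), ∀ p ∈ P, D p = d p.1 p.2 := by
    obtain ⟨g, hg⟩ := ContinuousMap.exists_restrict_eq (s := P) hPc.isClosed
      ⟨_, hdc.restrict⟩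
    exact ⟨g, fun p hp => ContinuousMap.congr_fun hg ⟨p, hp⟩⟩
  -- d x x = 0
  have hdd : ∀ x ∈ K, d x x = 0 := fun x hx => (hdeq x hx x hx).2 rfl
  -- positivity of d on distinct points
  have hdpos : ∀ x ∈ K, ∀ y ∈ K, x ≠ y → 0 < d x y := by
    intro x hx y hy hxy
    exact lt_of_le_of_ne (hd0 x hx y hy) fun h => hxy ((hdeq x hx y hy).1 h.symm)
  -- monotonicity
  have hmono : ∀ i, ∀ x ∈ K, ∀ y ∈ K, d (f i x) (f i y) ≤ d x y := by
    intro i x hx y hy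
    rcases eq_or_ne x y with rfl | hxy
    · rw [hdd x hx, hdd (f i x) (hfm i hx)]
    · exact (hcontr i x hx y hy hxy).le
  -- wordComp maps K into K
  have hwm : ∀ l : List I, Set.MapsTo (wordComp f l) K K := by
    intro l
    induction l with
    | nil => exact fun x hx => hx
    | cons i t ih => exact (hfm i).comp ih
  -- a bound on d over K × K
  obtain ⟨p₀, hp₀, hp₀max⟩ := hPc.exists_isMaxOn hPne hdc
  set Dmax : ℝ := d p₀.1 p₀.2 with hDmaxdef
  have hDmax : ∀ x ∈ K, ∀ y ∈ K, d x y ≤ Dmax := by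
    intro x hx y hy
    exact hp₀max (Set.mk_mem_prod hx hy)
  -- uniform contraction: for each δ > 0 there is a uniform additive gain c
  have lemA : ∀ δ : ℝ, 0 < δ → ∃ c : ℝ, 0 < c ∧
      ∀ i, ∀ x ∈ K, ∀ y ∈ K, δ ≤ d x y → d (f i x) (f i y) ≤ d x y - c := by
    intro δ hδ
    set S : Set (ℝ × ℝ) := P ∩ D ⁻¹' Set.Ici δ with hSdef
    have hSc : IsCompact S := hPc.inter_right (isClosed_Ici.preimage D.continuous)
    have hSP : S ⊆ P := Set.inter_subset_left
    have hmemS : ∀ x ∈ K, ∀ y ∈ K, δ ≤ d x y → (x, y) ∈ S := by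
      intro x hx y hy h
      refine ⟨Set.mk_mem_prod hx hy, ?_⟩
      simpa [hD (x, y) (Set.mk_mem_prod hx hy)] using h
    by_cases hSne : S.Nonempty
    · have H : ∀ i : I, ∃ c : ℝ, 0 < c ∧
          ∀ x ∈ K, ∀ y ∈ K, δ ≤ d x y → d (f i x) (f i y) ≤ d x y - c := by
        intro i
        -- the gain function
        set g : ℝ × ℝ → ℝ := fun p => d p.1 p.2 - d (f i p.1) (f i p.2) with hgdef
        have hφ : ContinuousOn (fun p : ℝ × ℝ => (f i p.1, f i p.2)) P :=
          ContinuousOn.prodMk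
            ((hfc i).comp continuousOn_fst fun p hp => hp.1)
            ((hfc i).comp continuousOn_snd fun p hp => hp.2)
        have hgc : ContinuousOn g S := by
          refine ContinuousOn.sub (hdc.mono hSP) ?_
          exact ((hdc.comp hφ fun p hp =>
            Set.mk_mem_prod (hfm i hp.1) (hfm i hp.2)).mono hSP)
        obtain ⟨q, hqS, hqmin⟩ := hSc.exists_isMinOn hSne hgc
        have hq1 : q.1 ∈ K := (hSP hqS).1
        have hq2 : q.2 ∈ K := (hSP hqS).2
        have hqδ : δ ≤ d q.1 q.2 := by
          have := hqS.2
          simpa [hD q (hSP hqS)] using this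
        have hqne : q.1 ≠ q.2 := by
          intro h
          rw [h, hdd q.2 hq2] at hqδ
          linarith
        refine ⟨g q, by
          have := hcontr i q.1 hq1 q.2 hq2 hqne
          simp only [hgdef]
          linarith, ?_⟩
        intro x hx y hy h
        have := hqmin (hmemS x hx y hy h)
        simp only [hgdef, Set.mem_setOf_eq, Prod.fst, Prod.snd] at this ⊢
        linarith
      choose c hcpos hc using H
      refine ⟨Finset.univ.inf' Finset.univ_nonempty c, ?_, ?_⟩
      · rw [Finset.lt_inf'_iff]
        exact fun i _ => hcpos i
      · intro i x hx y hy h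
        have h1 := hc i x hx y hy h
        have h2 : Finset.univ.inf' Finset.univ_nonempty c ≤ c i :=
          Finset.inf'_le _ (Finset.mem_univ i)
        linarith
    · refine ⟨1, one_pos, ?_⟩
      intro i x hx y hy h
      exact absurd ⟨(x, y), hmemS x hx y hy h⟩ hSne
  -- modulus: small d-distance implies small euclidean distance
  have lemB : ∀ ε : ℝ, 0 < ε → ∃ δ : ℝ, 0 < δ ∧
      ∀ x ∈ K, ∀ y ∈ K, d x y < δ → |x - y| < ε := by
    intro ε hε
    set T : Set (ℝ × ℝ) := P ∩ (fun p : ℝ × ℝ => |p.1 - p.2|) ⁻¹' Set.Ici ε with hTdef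
    have hTc : IsCompact T := hPc.inter_right
      (isClosed_Ici.preimage ((continuous_fst.sub continuous_snd).abs))
    by_cases hTne : T.Nonempty
    · obtain ⟨q, hqT, hqmin⟩ := hTc.exists_isMinOn hTne (hdc.mono Set.inter_subset_left)
      have hq1 : q.1 ∈ K := hqT.1.1
      have hq2 : q.2 ∈ K := hqT.1.2
      have hqne : q.1 ≠ q.2 := by
        intro h
        have := hqT.2
        simp only [Set.mem_preimage, Set.mem_Ici, h, sub_self, abs_zero] at this
        linarith
      refine ⟨d q.1 q.2, hdpos q.1 hq1 q.2 hq2 hqne, ?_⟩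
      intro x hx y hy h
      by_contra hcon
      push_neg at hcon
      have hxyT : (x, y) ∈ T := ⟨Set.mk_mem_prod hx hy, hcon⟩
      have := hqmin hxyT
      simp only [Set.mem_setOf_eq, Prod.fst, Prod.snd] at this
      linarith
    · refine ⟨1, one_pos, ?_⟩
      intro x hx y hy _
      by_contra hcon
      push_neg at hcon
      exact hTne ⟨(x, y), Set.mk_mem_prod hx hy, hcon⟩
  -- the key estimate along words
  have key : ∀ (δ c : ℝ), 0 < c →
      (∀ i, ∀ x ∈ K, ∀ y ∈ K, δ ≤ d x y → d (f i x) (f i y) ≤ d x y - c) →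
      ∀ l : List I, ∀ x ∈ K, ∀ y ∈ K,
        d (wordComp f l x) (wordComp f l y) ≤ max δ (Dmax - l.length * c) := by
    intro δ c hc hcontr' l
    induction l with
    | nil =>
      intro x hx y hy
      have := hDmax x hx y hy
      simp only [wordComp, id_eq, List.length_nil, Nat.cast_zero, zero_mul, sub_zero]
      exact le_max_of_le_right this
    | cons i t ih =>
      intro x hx y hy
      have hu : wordComp f t x ∈ K := hwm t hx
      have hv : wordComp f t y ∈ K := hwm t hy
      show d (f i (wordComp f t x)) (f i (wordComp f t y)) ≤ _
      have hlen : ((i :: t).length : ℝ) * c = (t.length : ℝ) * c + c := by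
        simp [List.length_cons]
        ring
      by_cases h : δ ≤ d (wordComp f t x) (wordComp f t y)
      · have h1 := hcontr' i _ hu _ hv h
        have h2 := ih x hx y hy
        have h3 : δ ≤ max δ (Dmax - ((i :: t).length : ℝ) * c) := le_max_left _ _
        have h4 : Dmax - ((i :: t).length : ℝ) * c ≤
            max δ (Dmax - ((i :: t).length : ℝ) * c) := le_max_right _ _
        rcases max_cases δ (Dmax - (t.length : ℝ) * c) with ⟨he, _⟩ | ⟨he, _⟩ <;>
          rw [he] at h2 <;> linarith
      · push_neg at h
        have := hmono i _ hu _ hv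
        exact le_max_of_le_left (by linarith)
  -- conclude
  rw [Metric.tendsto_atTop]
  intro ε hε
  obtain ⟨δ, hδ, hB⟩ := lemB (ε / 2) (by linarith)
  obtain ⟨c, hc, hA⟩ := lemA (δ / 2) (by linarith)
  obtain ⟨N, hN⟩ := exists_nat_ge ((Dmax - δ / 2) / c)
  refine ⟨N, fun n hn => ?_⟩
  have hdiam : Metric.diam (wordComp f (List.ofFn fun i : Fin n => a i) '' K) ≤ ε / 2 := by
    apply Metric.diam_le_of_forall_dist_le (by linarith)
    rintro p ⟨x, hx, rfl⟩ q ⟨y, hy, rfl⟩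
    have hk := key (δ / 2) c hc hA (List.ofFn fun i : Fin n => a i) x hx y hy
    have hlen : ((List.ofFn fun i : Fin n => a i).length : ℝ) = n := by
      simp
    rw [hlen] at hk
    have hnc : (Dmax - δ / 2) ≤ (n : ℝ) * c := by
      have hn' : (N : ℝ) ≤ (n : ℝ) := Nat.cast_le.2 hn
      have := (div_le_iff₀ hc).1 (hN.trans hn')
      linarith
    have hdlt : d (wordComp f (List.ofFn fun i : Fin n => a i) x)
        (wordComp f (List.ofFn fun i : Fin n => a i) y) < δ := by
      have : max (δ / 2) (Dmax - (n : ℝ) * c) ≤ δ / 2 := by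
        apply max_le le_rfl
        linarith
      linarith
    have := hB _ (hwm _ hx) _ (hwm _ hy) hdlt
    rw [Real.dist_eq]
    linarith
  rw [Real.dist_eq, sub_zero, abs_of_nonneg Metric.diam_nonneg]
  linarith
end
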